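/- For every A ⊆ ω₁, the following are equivalent: (i) ω₁ ∈ Ã, i.e., there exists a bijection b : ω₁ → ω₁ such that {α < ω₁ : otp(b[α]) ∈ A} contains a club subset of ω₁; (ii) A contains a club subset of ω₁. (In the paper's words: only club subsets of ω₁ have ω₁ in their tildes.) -/

import Mathlib

noncomputable section

/-- The first uncountable ordinal. -/
def omega1 : Ordinal.{0} := (Cardinal.aleph 1).ord

/-- The second uncountable cardinal, as an ordinal. -/
def omega2 : Ordinal.{0} := (Cardinal.aleph 2).ord

open Classical in
/-- The order type of a set of ordinals (the unique ordinal whose lift is the order type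
of the set with its induced well-order; every bounded set of ordinals has one). -/
def otp (s : Set Ordinal.{0}) : Ordinal.{0} :=
  if h : ∃ o : Ordinal.{0}, Ordinal.lift.{1} o = Ordinal.type ((· < ·) : s → s → Prop)
  then h.choose else 0

/-- `C` is a club subset of `ω₁`: a subset of `ω₁` that is unbounded in `ω₁` and
closed, i.e. contains the supremum of each of its nonempty subsets that is bounded
below `ω₁`. -/
def IsClub' (C : Set Ordinal.{0}) : Prop :=
  C ⊆ Set.Iio omega1 ∧
  (∀ α < omega1, ∃ β ∈ C, α < β) ∧
  (∀ s : Set Ordinal.{0}, s ⊆ C → s.Nonempty → sSup s < omega1 → sSup s ∈ C)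

/-- `S` is a stationary subset of `ω₁`: it meets every club subset of `ω₁`. -/
def IsStationary' (S : Set Ordinal.{0}) : Prop := ∀ C, IsClub' C → (S ∩ C).Nonempty

/-- `S` is certified at `γ` modulo the sequence `A = ⟨A α : α < ω₁⟩`. -/
def Certified (A : Ordinal.{0} → Set Ordinal.{0}) (S : Set Ordinal.{0}) (γ : Ordinal.{0}) :
    Prop :=
  ∃ a : Ordinal.{0} → Set Ordinal.{0},
    (∀ α < omega1, a α ⊆ Set.Iio γ ∧ (a α).Countable ∧ otp (a α) ∈ ⋃ ξ ∈ S, A ξ) ∧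
    (∀ α β : Ordinal.{0}, α < β → β < omega1 → a α ⊂ a β) ∧
    (∀ β, β < omega1 → Order.IsSuccLimit β → a β = ⋃ (α) (_ : α < β), a α) ∧
    Set.Iio γ = ⋃ (α) (_ : α < omega1), a α

/-- `f` is a canonical function for `γ`: for some bijection `π : ω₁ → γ`,
`f α = otp (π[α])` for all `α < ω₁`. -/
def IsCanonical (γ : Ordinal.{0}) (f : Ordinal.{0} → Ordinal.{0}) : Prop :=
  ∃ π : Ordinal.{0} → Ordinal.{0}, Set.BijOn π (Set.Iio omega1) (Set.Iio γ) ∧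
    ∀ α < omega1, f α = otp (π '' Set.Iio α)

/-!
A bijection `b` of `ω₁` maps `α` onto itself for club many `α < ω₁`: the countable
ordinals closed under both `b` and `b⁻¹`. At such `α` we have `otp (b[α]) = α`, so a club
witnessing `ω₁ ∈ Ã`, intersected with this one, is a club inside `A`. Conversely the identity
bijection turns a club inside `A` into a witness for `ω₁ ∈ Ã`.

Both this club and the intersection of two clubs come from one fact: for `g : ω₁ → ω₁` the
nonzero countable ordinals closed under `g` form a club, since the supremum of the `ω`-sequence
`α₀ = α + 1`, `αₙ₊₁ = sup {g β + 1 : β < αₙ}` is such an ordinal above `α`.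
-/

open Set Ordinal

lemma otp_Iio (a : Ordinal.{0}) : otp (Iio a) = a := by
  have h : Ordinal.lift.{1} a = Ordinal.type ((· < ·) : Iio a → Iio a → Prop) := by
    rw [← Ordinal.typein_ordinal]
    rfl
  have hex : ∃ o : Ordinal.{0}, Ordinal.lift.{1} o = Ordinal.type ((· < ·) : Iio a → Iio a → Prop) :=
    ⟨a, h⟩
  rw [otp, dif_pos hex]
  exact Ordinal.lift_inj.mp (hex.choose_spec.trans h.symm)

lemma omega1_eq_omega_one : omega1 = ω₁ := Cardinal.ord_aleph 1

lemma omega1_isSuccLimit : Order.IsSuccLimit omega1 :=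
  Cardinal.isSuccLimit_ord (Cardinal.aleph0_le_aleph 1)

lemma countable_Iio_of_lt_omega1 {γ : Ordinal.{0}} (hγ : γ < omega1) : (Iio γ).Countable := by
  rw [← Cardinal.le_aleph0_iff_set_countable, Cardinal.mk_Iio_ordinal, Cardinal.lift_le_aleph0,
    ← Cardinal.lt_aleph_one_iff]
  exact Cardinal.lt_ord.1 hγ

lemma iSup_lt_omega1 {ι : Type*} [Countable ι] {f : ι → Ordinal.{0}} (hf : ∀ i, f i < omega1) :
    ⨆ i, f i < omega1 := by
  rw [omega1_eq_omega_one] at hf ⊢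
  exact Ordinal.iSup_lt_omega_one hf

/-- Zero is left out so that the closure points of `nextMem C` lie in the club `C`. -/
def closurePoints (g : Ordinal.{0} → Ordinal.{0}) : Set Ordinal.{0} :=
  {α | 0 < α ∧ α < omega1 ∧ ∀ β < α, g β < α}

lemma closurePoints_sup (g g' : Ordinal.{0} → Ordinal.{0}) :
    closurePoints (g ⊔ g') = closurePoints g ∩ closurePoints g' := by
  ext α
  simp only [closurePoints, mem_ofPred_eq, mem_inter_iff, Pi.sup_apply, sup_lt_iff]
  grind

lemma Set.MapsTo.sup_Iio {α β : Type*} [LinearOrder β] {f g : α → β} {s : Set α} {c : β}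
    (hf : MapsTo f s (Iio c)) (hg : MapsTo g s (Iio c)) : MapsTo (f ⊔ g) s (Iio c) :=
  fun _ hx => sup_lt_iff.2 ⟨hf hx, hg hx⟩

section closurePoints

variable {g : Ordinal.{0} → Ordinal.{0}}

lemma exists_mem_closurePoints_gt (hg : MapsTo g (Iio omega1) (Iio omega1)) {α : Ordinal.{0}}
    (hα : α < omega1) : ∃ σ ∈ closurePoints g, α < σ := by
  obtain ⟨e, he0, he_succ⟩ : ∃ e : ℕ → Ordinal.{0},
      e 0 = α + 1 ∧ ∀ n, e (n + 1) = ⨆ β : Iio (e n), g β + 1 :=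
    ⟨fun n => Nat.rec (α + 1) (fun _ γ => ⨆ β : Iio γ, g β + 1) n, rfl, fun _ => rfl⟩
  have he : ∀ n, e n < omega1 := by
    intro n
    induction n with
    | zero => exact he0 ▸ omega1_isSuccLimit.add_one_lt hα
    | succ n ih =>
      have := (countable_Iio_of_lt_omega1 ih).to_subtype
      rw [he_succ]
      exact iSup_lt_omega1 fun β => omega1_isSuccLimit.add_one_lt (hg (β.2.trans ih))
  have hασ : α < ⨆ n, e n := (lt_add_one α).trans_le (he0 ▸ Ordinal.le_iSup e 0)
  refine ⟨⨆ n, e n, ⟨hασ.pos, iSup_lt_omega1 he, fun β hβ => ?_⟩, hασ⟩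
  obtain ⟨n, hn⟩ := Ordinal.lt_iSup_iff.1 hβ
  calc g β < g β + 1 := lt_add_one _
    _ ≤ e (n + 1) := he_succ n ▸ Ordinal.le_iSup (fun γ : Iio (e n) => g γ + 1) ⟨β, hn⟩
    _ ≤ ⨆ n, e n := Ordinal.le_iSup e (n + 1)

lemma isClub'_closurePoints (hg : MapsTo g (Iio omega1) (Iio omega1)) :
    IsClub' (closurePoints g) := by
  refine ⟨fun α hα => hα.2.1, fun α hα => exists_mem_closurePoints_gt hg hα,
    fun s hs ⟨x, hx⟩ hlt => ?_⟩
  have hbdd : BddAbove s := ⟨omega1, fun y hy => (hs hy).2.1.le⟩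
  refine ⟨(hs hx).1.trans_le (le_csSup hbdd hx), hlt, fun β hβ => ?_⟩
  obtain ⟨y, hy, hβy⟩ := exists_lt_of_lt_csSup ⟨x, hx⟩ hβ
  exact ((hs hy).2.2 β hβy).trans_le (le_csSup hbdd hy)

end closurePoints

def nextMem (C : Set Ordinal.{0}) (β : Ordinal.{0}) : Ordinal.{0} := sInf {γ ∈ C | β < γ}

namespace IsClub'

variable {C D : Set Ordinal.{0}}

lemma nextMem_mem (hC : IsClub' C) {β : Ordinal.{0}} (hβ : β < omega1) :
    nextMem C β ∈ C ∧ β < nextMem C β := by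
  obtain ⟨γ, hγ, hβγ⟩ := hC.2.1 β hβ
  exact csInf_mem (s := {γ ∈ C | β < γ}) ⟨γ, hγ, hβγ⟩

lemma mapsTo_nextMem (hC : IsClub' C) : MapsTo (nextMem C) (Iio omega1) (Iio omega1) :=
  fun _ hβ => hC.1 (hC.nextMem_mem hβ).1

lemma closurePoints_nextMem_subset (hC : IsClub' C) : closurePoints (nextMem C) ⊆ C := by
  rintro α ⟨hα0, hα, hαg⟩
  have hsup : sSup (C ∩ Iio α) = α := by
    refine le_antisymm (csSup_le' fun γ hγ => (mem_Iio.1 hγ.2).le) (le_of_forall_lt fun β hβ => ?_)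
    have hβC := hC.nextMem_mem (hβ.trans hα)
    exact hβC.2.trans_le (le_csSup bddAbove_of_small ⟨hβC.1, hαg β hβ⟩)
  have hne : (C ∩ Iio α).Nonempty := ⟨nextMem C 0, (hC.nextMem_mem (hα0.trans hα)).1, hαg 0 hα0⟩
  have hmem := hC.2.2 _ inter_subset_left hne (by rwa [hsup])
  rwa [hsup] at hmem

lemma inter (hC : IsClub' C) (hD : IsClub' D) : IsClub' (C ∩ D) := by
  refine ⟨fun α hα => hC.1 hα.1, fun α hα => ?_, fun s hs hne hlt =>
    ⟨hC.2.2 s (fun x hx => (hs hx).1) hne hlt, hD.2.2 s (fun x hx => (hs hx).2) hne hlt⟩⟩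
  obtain ⟨σ, hσ, hασ⟩ :=
    exists_mem_closurePoints_gt (hC.mapsTo_nextMem.sup_Iio hD.mapsTo_nextMem) hα
  rw [closurePoints_sup] at hσ
  exact ⟨σ, ⟨hC.closurePoints_nextMem_subset hσ.1, hD.closurePoints_nextMem_subset hσ.2⟩, hασ⟩

end IsClub'

lemma Set.BijOn.exists_isClub'_image_Iio_eq {b : Ordinal.{0} → Ordinal.{0}}
    (hb : BijOn b (Iio omega1) (Iio omega1)) :
    ∃ E, IsClub' E ∧ ∀ α ∈ E, b '' Iio α = Iio α := by
  have hinv := hb.invOn_invFunOn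
  refine ⟨closurePoints (b ⊔ Function.invFunOn b (Iio omega1)),
    isClub'_closurePoints (hb.mapsTo.sup_Iio hb.surjOn.mapsTo_invFunOn), ?_⟩
  rintro α ⟨-, hα, hαg⟩
  refine (image_subset_iff.2 fun β hβ => (sup_lt_iff.1 (hαg β hβ)).1).antisymm fun γ hγ => ?_
  exact ⟨_, (sup_lt_iff.1 (hαg γ hγ)).2, hinv.2 ((mem_Iio.1 hγ).trans hα)⟩

theorem omega1_mem_tilde_iff_contains_club_general (A : Set Ordinal.{0}) :
    (∃ b : Ordinal.{0} → Ordinal.{0}, Set.BijOn b (Set.Iio omega1) (Set.Iio omega1) ∧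
      ∃ C, IsClub' C ∧ C ⊆ {α | α < omega1 ∧ otp (b '' Set.Iio α) ∈ A}) ↔
    (∃ C, IsClub' C ∧ C ⊆ A) := by
  constructor
  · rintro ⟨b, hb, C, hC, hCA⟩
    obtain ⟨E, hE, hbE⟩ := hb.exists_isClub'_image_Iio_eq
    refine ⟨C ∩ E, hC.inter hE, fun α ⟨hαC, hαE⟩ => ?_⟩
    simpa [hbE α hαE, otp_Iio] using (hCA hαC).2
  · rintro ⟨C, hC, hCA⟩
    exact ⟨id, bijOn_id _, C, hC, fun α hα => ⟨hC.1 hα, by simpa [otp_Iio] using hCA hα⟩⟩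

/-- For `A ⊆ ω₁`, `ω₁ ∈ Ã` (i.e. there is a bijection `b : ω₁ → ω₁` with
`{α < ω₁ : otp (b[α]) ∈ A}` containing a club) iff `A` contains a club subset of `ω₁`. -/
theorem omega1_mem_tilde_iff_contains_club (A : Set Ordinal.{0})
    (hA : A ⊆ Set.Iio omega1) :
    (∃ b : Ordinal.{0} → Ordinal.{0}, Set.BijOn b (Set.Iio omega1) (Set.Iio omega1) ∧
      ∃ C, IsClub' C ∧ C ⊆ {α | α < omega1 ∧ otp (b '' Set.Iio α) ∈ A}) ↔
    (∃ C, IsClub' C ∧ C ⊆ A) :=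
  omega1_mem_tilde_iff_contains_club_general A
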